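/- arXiv:2301.12286 — 3 statements merged into one kernel-verified Lean document; each statement's English description precedes it below -/
import Mathlib

section
/- Let (S,*) be a finite shelf such that for every x ∈ S the set {y ∈ S : x*y = x} has exactly one element and the set {y ∈ S : y*x = y} has exactly one element (equivalently, the shelf polynomial of S equals |S|·s·t). Then S is idempotent: x * x = x for all x ∈ S. -/
/-- A binary operation is right self-distributive (a shelf operation). -/
def RightDist {S : Type*} (op : S → S → S) : Prop :=
  ∀ x y z : S, op (op x y) z = op (op x z) (op y z)

/-- If `(S,*)` is a finite shelf in which, for every `x`, exactly one `y` satisfies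
`x*y = x` and exactly one `y` satisfies `y*x = y` (i.e. the shelf polynomial is `|S|·s·t`),
then `S` is idempotent. -/
theorem idem_of_shelf_polynomial {S : Type*} [Finite S] (op : S → S → S)
    (h : RightDist op)
    (hr : ∀ x : S, Nat.card {y : S // op x y = x} = 1)
    (hc : ∀ x : S, Nat.card {y : S // op y x = y} = 1) :
    ∀ x : S, op x x = x := by
  intro x
  obtain ⟨hsub, ⟨⟨a, ha⟩⟩⟩ := Nat.card_eq_one_iff_unique.mp (hr x)
  have haa : op x (op a a) = x := by
    have hd := h x a a
    rw [ha, ha] at hd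
    exact hd.symm
  have haa' : op a a = a := by
    have := @Subsingleton.elim _ hsub ⟨op a a, haa⟩ ⟨a, ha⟩
    exact congrArg Subtype.val this
  obtain ⟨hsub2, -⟩ := Nat.card_eq_one_iff_unique.mp (hc a)
  have hxa : x = a := by
    have := @Subsingleton.elim _ hsub2 ⟨x, ha⟩ ⟨a, haa'⟩
    exact congrArg Subtype.val this
  rw [hxa] at ha ⊢
  exact ha
end

section
/- Up to isomorphism, there are exactly 2 unital shelves of order 3, i.e. the set of right self-distributive binary operations on a 3-element set which admit a two-sided identity element has exactly 2 equivalence classes under shelf isomorphism. -/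
/-- A shelf is connected if any element can be reached from any other by finitely many
right multiplications: `y = (⋯((x*x₁)*x₂)⋯)*xₘ`. -/
def ShelfConnected {S : Type*} (op : S → S → S) : Prop :=
  ∀ x y : S, ∃ l : List S, l.foldl op x = y

/-- Two shelf operations are isomorphic if there is a bijection intertwining them. -/
def ShelfIso {S T : Type*} (op₁ : S → S → S) (op₂ : T → T → T) : Prop :=
  ∃ f : S ≃ T, ∀ x y : S, f (op₁ x y) = op₂ (f x) (f y)

/-- A shelf operation is unital if it admits a two-sided identity element. -/
def ShelfUnital {S : Type*} (op : S → S → S) : Prop :=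
  ∃ e : S, ∀ x : S, op e x = x ∧ op x e = x

def opA : Fin 3 → Fin 3 → Fin 3 := ![![0,0,0],![0,1,1],![0,1,2]]
def opB : Fin 3 → Fin 3 → Fin 3 := ![![0,0,2],![0,1,2],![0,2,2]]

def mk4 (a b c d : Fin 3) : Fin 3 → Fin 3 → Fin 3 := ![![a,b,0],![c,d,1],![0,1,2]]

lemma key2 : ∀ a b c d : Fin 3, RightDist (mk4 a b c d) →
    ShelfIso (mk4 a b c d) opA ∨ ShelfIso (mk4 a b c d) opB := by
  unfold RightDist ShelfIso; decide

lemma notiso : ¬ ShelfIso opA opB := by unfold ShelfIso; decide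

lemma hA : RightDist opA ∧ ShelfUnital opA := by unfold RightDist ShelfUnital; decide
lemma hB : RightDist opB ∧ ShelfUnital opB := by unfold RightDist ShelfUnital; decide

lemma iso_refl {S : Type*} (op : S → S → S) : ShelfIso op op :=
  ⟨Equiv.refl S, fun _ _ => rfl⟩

lemma iso_symm {S T : Type*} {op₁ : S → S → S} {op₂ : T → T → T}
    (h : ShelfIso op₁ op₂) : ShelfIso op₂ op₁ := by
  obtain ⟨f, hf⟩ := h
  refine ⟨f.symm, fun x y => ?_⟩
  apply f.injective
  rw [f.apply_symm_apply, hf, f.apply_symm_apply, f.apply_symm_apply]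

lemma iso_trans {S T U : Type*} {op₁ : S → S → S} {op₂ : T → T → T} {op₃ : U → U → U}
    (h₁ : ShelfIso op₁ op₂) (h₂ : ShelfIso op₂ op₃) : ShelfIso op₁ op₃ := by
  obtain ⟨f, hf⟩ := h₁; obtain ⟨g, hg⟩ := h₂
  exact ⟨f.trans g, fun x y => by simp [hf, hg]⟩

/-- Conjugating by a bijection preserves everything. -/
lemma key : ∀ op : Fin 3 → Fin 3 → Fin 3, RightDist op → ShelfUnital op →
    ShelfIso op opA ∨ ShelfIso op opB := by
  intro op hd ⟨e, he⟩
  set g : Fin 3 ≃ Fin 3 := Equiv.swap e 2 with hg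
  set op' : Fin 3 → Fin 3 → Fin 3 := fun x y => g (op (g.symm x) (g.symm y)) with hop'
  have hiso : ShelfIso op op' := ⟨g, fun x y => by simp [hop']⟩
  have hd' : RightDist op' := by
    intro x y z
    simp only [hop', Equiv.symm_apply_apply]
    rw [hd]
  have hid : ∀ x, op' x 2 = x ∧ op' 2 x = x := by
    intro x
    have h2 : g.symm 2 = e := by simp [hg, Equiv.swap_apply_right]
    constructor
    · simp [hop', h2, (he _).2]
    · simp [hop', h2, (he _).1]
  have heq : op' = mk4 (op' 0 0) (op' 0 1) (op' 1 0) (op' 1 1) := by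
    funext x y
    fin_cases x <;> fin_cases y <;>
      simp [mk4, (hid _).1, (hid _).2]
  rw [heq] at hd' hiso
  rcases key2 _ _ _ _ hd' with h | h
  · exact Or.inl (iso_trans hiso h)
  · exact Or.inr (iso_trans hiso h)


/-- Up to isomorphism there are exactly 2 unital shelves of order 3. -/
theorem card_unital_shelves_three :
    Nat.card (Quot (fun a b : {op : Fin 3 → Fin 3 → Fin 3 // RightDist op ∧ ShelfUnital op} =>
      ShelfIso a.1 b.1)) = 2 := by
  set r := fun a b : {op : Fin 3 → Fin 3 → Fin 3 // RightDist op ∧ ShelfUnital op} =>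
      ShelfIso a.1 b.1 with hr
  have hequiv : Equivalence r := ⟨fun a => iso_refl a.1, fun h => iso_symm h,
    fun h₁ h₂ => iso_trans h₁ h₂⟩
  rw [Nat.card_eq_two_iff]
  refine ⟨Quot.mk r ⟨opA, hA⟩, Quot.mk r ⟨opB, hB⟩, ?_, ?_⟩
  · intro h
    exact notiso ((hequiv.eqvGen_iff).mp (Quot.eq.mp h))
  · rw [Set.eq_univ_iff_forall]
    intro q
    induction q using Quot.ind with
    | _ a =>
      simp only [Set.mem_insert_iff, Set.mem_singleton_iff]
      rcases key a.1 a.2.1 a.2.2 with h | h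
      · exact Or.inl (Quot.sound h)
      · exact Or.inr (Quot.sound h)
end

section
/- Up to isomorphism, there are exactly 3 connected quandles of order 5, i.e. the set of right self-distributive, idempotent binary operations on a 5-element set for which every right multiplication R_x(y) = y*x is a bijection and which are connected has exactly 3 equivalence classes under shelf isomorphism. -/
/-- A rack is a shelf in which every right multiplication `R_x(y) = y*x` is a bijection. -/
def IsRackOp {S : Type*} (op : S → S → S) : Prop :=
  ∀ x : S, Function.Bijective (fun y => op y x)

/-
Right distributivity says that every right multiplication `R_z = op · z` is an automorphism, so
`R_{R_z y} = R_z R_y R_z⁻¹`. A connected quandle on five points has some `R_z ≠ id`; after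
relabelling, `z = 0` and `R_0` is one of the normal forms `(1 2)`, `(1 2)(3 4)`, `(1 2 3)`,
`(1 2 3 4)`. The other columns `R_1, …, R_4` are permutations fixing their own index. A
kernel-checked search filling them one at a time, and discarding every partial table that already
violates an instance of right distributivity, shows that each connected table is isomorphic to an
Alexander quandle `x * y = a x + (1 - a) y` on `ZMod 5` with `a ∈ {2, 3, 4}`; these three are
pairwise non-isomorphic.
-/

open Function

theorem Nat.card_quot_eq_of_transversal {α ι : Type*} {r : α → α → Prop} (hr : Equivalence r)
    (rep : ι → α) (hrep : ∀ i j, r (rep i) (rep j) → i = j) (hcover : ∀ a, ∃ i, r a (rep i)) :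
    Nat.card (Quot r) = Nat.card ι := by
  refine (Nat.card_eq_of_bijective (fun i => Quot.mk r (rep i)) ⟨fun i j hij => ?_, ?_⟩).symm
  · exact hrep i j ((hr.eqvGen_iff).mp (Quot.eqvGen_exact hij))
  · rintro ⟨a⟩
    obtain ⟨i, hi⟩ := hcover a
    exact ⟨i, Quot.sound (hr.symm hi)⟩

section Shelf

variable {S T U : Type*}

theorem ShelfIso.refl (op : S → S → S) : ShelfIso op op :=
  ⟨Equiv.refl S, fun _ _ => rfl⟩

theorem ShelfIso.symm {op₁ : S → S → S} {op₂ : T → T → T} (h : ShelfIso op₁ op₂) :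
    ShelfIso op₂ op₁ := by
  obtain ⟨f, hf⟩ := h
  exact ⟨f.symm, fun x y => f.injective (by simp [hf])⟩

theorem ShelfIso.trans {op₁ : S → S → S} {op₂ : T → T → T} {op₃ : U → U → U}
    (h₁₂ : ShelfIso op₁ op₂) (h₂₃ : ShelfIso op₂ op₃) : ShelfIso op₁ op₃ := by
  obtain ⟨f, hf⟩ := h₁₂
  obtain ⟨g, hg⟩ := h₂₃
  exact ⟨f.trans g, fun x y => by simp [hf, hg]⟩

section Invariance

variable {op₁ : S → S → S} {op₂ : T → T → T}

theorem ShelfIso.rightDist (h : ShelfIso op₁ op₂) (hd : RightDist op₁) : RightDist op₂ := by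
  obtain ⟨f, hf⟩ := h
  intro x y z
  rw [← f.apply_symm_apply x, ← f.apply_symm_apply y, ← f.apply_symm_apply z]
  simp only [← hf]
  rw [hd]

theorem ShelfIso.idem (h : ShelfIso op₁ op₂) (hi : ∀ x, op₁ x x = x) : ∀ x, op₂ x x = x := by
  obtain ⟨f, hf⟩ := h
  intro x
  rw [← f.apply_symm_apply x, ← hf, hi]

theorem ShelfIso.isRackOp (h : ShelfIso op₁ op₂) (hr : IsRackOp op₁) : IsRackOp op₂ := by
  obtain ⟨f, hf⟩ := h
  intro x
  have hconj : (fun y => op₂ y x) = f ∘ (fun y => op₁ y (f.symm x)) ∘ f.symm := by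
    funext y
    simp [hf]
  rw [hconj]
  exact f.bijective.comp ((hr _).comp f.symm.bijective)

theorem ShelfIso.shelfConnected (h : ShelfIso op₁ op₂) (hc : ShelfConnected op₁) :
    ShelfConnected op₂ := by
  obtain ⟨f, hf⟩ := h
  intro x y
  obtain ⟨l, hl⟩ := hc (f.symm x) (f.symm y)
  refine ⟨l.map f, ?_⟩
  rw [List.foldl_map, ← f.apply_symm_apply x, List.foldl_hom f fun a b => (hf a b).symm, hl,
    f.apply_symm_apply]

end Invariance

def relabel (e : S ≃ T) (op : S → S → S) : T → T → T :=
  fun x y => e (op (e.symm x) (e.symm y))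

theorem shelfIso_relabel (e : S ≃ T) (op : S → S → S) : ShelfIso op (relabel e op) :=
  ⟨e, fun x y => by simp [relabel]⟩

theorem shelfConnected_iff_forall_finset [Fintype S] {op : S → S → S} :
    ShelfConnected op ↔
      ∀ s : Finset S, s.Nonempty → (∀ a ∈ s, ∀ z, op a z ∈ s) → ∀ y, y ∈ s := by
  constructor
  · rintro hc s ⟨a, ha⟩ hs y
    obtain ⟨l, rfl⟩ := hc a y
    induction l generalizing a with
    | nil => exact ha
    | cons z l ih => exact ih _ (hs a ha z)
  · intro h x y
    classical
    have hx : x ∈ ({y | ∃ l : List S, l.foldl op x = y} : Finset S) := by simpa using ⟨[], rfl⟩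
    simpa using h {y | ∃ l : List S, l.foldl op x = y} ⟨x, hx⟩ (fun a ha z => by
      obtain ⟨l, rfl⟩ := (Finset.mem_filter.mp ha).2
      simpa using ⟨l ++ [z], by simp⟩) y

theorem ShelfConnected.exists_op_ne [Nontrivial S] {op : S → S → S} (hc : ShelfConnected op) :
    ∃ x z, op x z ≠ x := by
  by_contra! htriv
  obtain ⟨x, y, hxy⟩ := exists_pair_ne S
  obtain ⟨l, hl⟩ := hc x y
  exact hxy (List.foldl_fixed' (htriv x) l ▸ hl)

/-- The instances of right distributivity that read only the columns `op · y` with `s y`. -/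
def RightDistOn (s : S → Prop) (op : S → S → S) : Prop :=
  ∀ y z, s y → s z → s (op y z) → ∀ x, op (op x y) z = op (op x z) (op y z)

theorem RightDist.rightDistOn {s : S → Prop} {op op₀ : S → S → S} (hd : RightDist op)
    (hagree : ∀ x y, s y → op₀ x y = op x y) : RightDistOn s op₀ := by
  intro y z hy hz hyz x
  rw [hagree y z hz] at hyz
  simp only [fun w => hagree w y hy, fun w => hagree w z hz, fun w => hagree w _ hyz]
  exact hd x y z

def IsConnectedQuandle (op : S → S → S) : Prop :=
  RightDist op ∧ (∀ x, op x x = x) ∧ IsRackOp op ∧ ShelfConnected op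

end Shelf

section Affine

variable {R : Type*} [Ring R]

def alexanderOp (a : R) (x y : R) : R :=
  a * x + (1 - a) * y

theorem rightDist_alexanderOp (a : R) : RightDist (alexanderOp a) := by
  intro x y z
  simp only [alexanderOp]
  noncomm_ring

theorem alexanderOp_self (a x : R) : alexanderOp a x x = x := by
  simp only [alexanderOp]
  noncomm_ring

theorem isRackOp_alexanderOp {a : R} (ha : IsUnit a) : IsRackOp (alexanderOp a) := by
  obtain ⟨u, rfl⟩ := ha
  intro x
  exact ((Units.mulLeft u).trans (Equiv.addRight _)).bijective

theorem shelfConnected_alexanderOp {a : R} (ha : IsUnit (1 - a)) : ShelfConnected (alexanderOp a) := by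
  obtain ⟨u, hu⟩ := ha
  intro x y
  refine ⟨[↑u⁻¹ * (y - a * x)], ?_⟩
  simp [alexanderOp, ← hu, ← mul_assoc]

end Affine

section FinPerms

variable {n : ℕ}

def finPerms (n : ℕ) : List (Fin n → Fin n) :=
  (List.finRange n).permutations'.map fun l i => l.getD i i

theorem mem_finPerms_of_bijective {f : Fin n → Fin n} (hf : Bijective f) : f ∈ finPerms n := by
  refine List.mem_map.mpr ⟨(List.finRange n).map f, List.mem_permutations'.mpr
    (Equiv.Perm.map_finRange_perm (Equiv.ofBijective f hf)), ?_⟩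
  funext i
  simp

theorem bijective_of_mem_finPerms {f : Fin n → Fin n} (hf : f ∈ finPerms n) : Bijective f := by
  obtain ⟨l, hl, rfl⟩ := List.mem_map.mp hf
  have hperm := List.mem_permutations'.mp hl
  have hlen : l.length = n := by simpa using hperm.length_eq
  have hnodup : l.Nodup := hperm.nodup_iff.mpr (List.nodup_finRange n)
  refine Finite.injective_iff_bijective.mp fun i j hij => Fin.ext ?_
  simp only [List.getD_eq_getElem _ _ (by omega : (i : ℕ) < l.length),
    List.getD_eq_getElem _ _ (by omega : (j : ℕ) < l.length)] at hij
  exact hnodup.getElem_inj_iff.mp hij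

/- Bounded quantifiers over lists of functions are decided along the list; the general `Fintype`
instances would instead run through all `n ^ n` functions. -/
instance (l : List (Fin n → Fin n)) (P : (Fin n → Fin n) → Prop) [DecidablePred P] :
    Decidable (∀ f ∈ l, P f) :=
  List.decidableBAll P l

instance (l : List (Fin n → Fin n)) (P : (Fin n → Fin n) → Prop) [DecidablePred P] :
    Decidable (∃ f ∈ l, P f) :=
  List.decidableBEx P l

theorem shelfIso_iff_exists_mem_finPerms {op q : Fin n → Fin n → Fin n} :
    ShelfIso op q ↔ ∃ f ∈ finPerms n, ∀ x y, f (op x y) = q (f x) (f y) :=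
  ⟨fun ⟨f, hf⟩ => ⟨f, mem_finPerms_of_bijective f.bijective, hf⟩,
    fun ⟨_, hmem, hf⟩ => ⟨Equiv.ofBijective _ (bijective_of_mem_finPerms hmem), hf⟩⟩

instance (op q : Fin n → Fin n → Fin n) : Decidable (ShelfIso op q) :=
  decidable_of_iff _ shelfIso_iff_exists_mem_finPerms.symm

instance (op : Fin n → Fin n → Fin n) : Decidable (ShelfConnected op) :=
  decidable_of_iff _ shelfConnected_iff_forall_finset.symm

end FinPerms

section Search

variable {n : ℕ}

def setColumn (op : Fin n → Fin n → Fin n) (k : Fin n) (σ : Fin n → Fin n) :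
    Fin n → Fin n → Fin n :=
  fun x y => if y = k then σ x else op x y

/-- The columns of `op₀` outside `ks` count as already filled; those in `ks` are filled in order
with permutations fixing their index, pruning as soon as the filled part violates right
distributivity. -/
def Search (P : (Fin n → Fin n → Fin n) → Prop) : List (Fin n) → (Fin n → Fin n → Fin n) → Prop
  | [], op => P op
  | k :: ks, op => ∀ σ ∈ finPerms n, σ k = k → RightDistOn (· ∉ ks) (setColumn op k σ) →
      Search P ks (setColumn op k σ)

instance (s : Fin n → Prop) [DecidablePred s] (op : Fin n → Fin n → Fin n) :
    Decidable (RightDistOn s op) := by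
  unfold RightDistOn
  infer_instance

instance Search.decidable (P : (Fin n → Fin n → Fin n) → Prop) [DecidablePred P] :
    (ks : List (Fin n)) → (op : Fin n → Fin n → Fin n) → Decidable (Search P ks op)
  | [], op => inferInstanceAs (Decidable (P op))
  | _ :: ks, _ =>
    have := fun op' => Search.decidable P ks op'
    inferInstanceAs (Decidable (∀ σ ∈ finPerms n, _))

theorem Search.sound {P : (Fin n → Fin n → Fin n) → Prop} {op : Fin n → Fin n → Fin n}
    (hd : RightDist op) (hi : ∀ x, op x x = x) (hr : IsRackOp op) :
    ∀ {ks : List (Fin n)} {op₀ : Fin n → Fin n → Fin n},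
      Search P ks op₀ → (∀ x y, y ∉ ks → op₀ x y = op x y) → P op
  | [], op₀, hs, hagree => by
    obtain rfl : op₀ = op := funext₂ fun x y => hagree x y List.not_mem_nil
    exact hs
  | k :: ks, op₀, hs, hagree => by
    have hagree' : ∀ x y, y ∉ ks → setColumn op₀ k (op · k) x y = op x y := by
      intro x y hy
      by_cases hyk : y = k
      · simp [setColumn, hyk]
      · simp [setColumn, hyk, hagree x y (by simp [hyk, hy])]
    exact Search.sound hd hi hr
      (hs _ (mem_finPerms_of_bijective (hr k)) (hi k) (hd.rightDistOn hagree')) hagree'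

end Search

section OrderFive

/-- `alexanderOp` on `ZMod 5`, typed on the definitionally equal `Fin 5` so that the `Fin n`
instances above apply. -/
def alexander5 (a : ZMod 5) : Fin 5 → Fin 5 → Fin 5 :=
  alexanderOp (R := ZMod 5) a

theorem isConnectedQuandle_alexander5 {a : ZMod 5} (ha0 : a ≠ 0) (ha1 : a ≠ 1) :
    IsConnectedQuandle (alexander5 a) :=
  have : Fact (Nat.Prime 5) := ⟨Nat.prime_five⟩
  ⟨rightDist_alexanderOp (R := ZMod 5) a, alexanderOp_self (R := ZMod 5) a,
    isRackOp_alexanderOp (R := ZMod 5) (isUnit_iff_ne_zero.mpr ha0),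
    shelfConnected_alexanderOp (R := ZMod 5) (isUnit_iff_ne_zero.mpr (sub_ne_zero.mpr ha1.symm))⟩

theorem eq_of_shelfIso_alexander5 :
    ∀ a b : ZMod 5, ShelfIso (alexander5 a) (alexander5 b) → a = b := by
  decide +kernel

/-- One representative of each conjugacy class of non-identity permutations of `{1, 2, 3, 4}`:
`(1 2)`, `(1 2)(3 4)`, `(1 2 3)`, `(1 2 3 4)`. -/
def cycleTypeReps : List (Fin 5 → Fin 5) :=
  [![0, 2, 1, 3, 4], ![0, 2, 1, 4, 3], ![0, 2, 3, 1, 4], ![0, 2, 3, 4, 1]]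

theorem exists_conj_mem_cycleTypeReps :
    ∀ z : Fin 5, ∀ p ∈ finPerms 5, p z = z → (∃ x, p x ≠ x) →
      ∃ g ∈ finPerms 5, g z = 0 ∧ ∃ c ∈ cycleTypeReps, ∀ x, g (p x) = c (g x) := by
  decide +kernel

theorem search_cycleTypeReps : ∀ c ∈ cycleTypeReps,
    Search (fun op => ShelfConnected op → ∃ a : ZMod 5, a ≠ 0 ∧ a ≠ 1 ∧ ShelfIso op (alexander5 a))
      [1, 2, 3, 4] (setColumn (fun x _ => x) 0 c) := by
  decide +kernel

theorem exists_shelfIso_alexander5 {op : Fin 5 → Fin 5 → Fin 5} (h : IsConnectedQuandle op) :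
    ∃ a : ZMod 5, a ≠ 0 ∧ a ≠ 1 ∧ ShelfIso op (alexander5 a) := by
  obtain ⟨hd, hi, hr, hc⟩ := h
  obtain ⟨w, z, hwz⟩ := hc.exists_op_ne
  obtain ⟨g, hg, hgz, c, hc', hgc⟩ :=
    exists_conj_mem_cycleTypeReps z _ (mem_finPerms_of_bijective (hr z)) (hi z) ⟨w, hwz⟩
  set e := Equiv.ofBijective g (bijective_of_mem_finPerms hg)
  have hiso := shelfIso_relabel e op
  have hcol : ∀ x, relabel e op x 0 = c x := by
    intro x
    have hz : e.symm 0 = z := e.symm_apply_eq.mpr hgz.symm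
    rw [relabel, hz]
    exact (hgc _).trans (congrArg c (e.apply_symm_apply x))
  have hagree : ∀ x y, y ∉ [1, 2, 3, 4] → setColumn (fun x _ => x) 0 c x y = relabel e op x y := by
    intro x y hy
    obtain rfl : y = 0 := by fin_cases y <;> simp_all
    simp [setColumn, hcol]
  obtain ⟨a, ha0, ha1, ha⟩ := (search_cycleTypeReps c hc').sound (hiso.rightDist hd)
    (hiso.idem hi) (hiso.isRackOp hr) hagree (hiso.shelfConnected hc)
  exact ⟨a, ha0, ha1, hiso.trans ha⟩

end OrderFive

/-- Up to isomorphism there are exactly 3 connected quandles of order 5. -/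
theorem card_connected_quandles_five :
    Nat.card (Quot (fun a b : {op : Fin 5 → Fin 5 → Fin 5 // RightDist op ∧ (∀ x, op x x = x) ∧ IsRackOp op ∧ ShelfConnected op} =>
      ShelfIso a.1 b.1)) = 3 := by
  let rep (a : {a : ZMod 5 // a ≠ 0 ∧ a ≠ 1}) : {op // IsConnectedQuandle op} :=
    ⟨alexander5 a, isConnectedQuandle_alexander5 a.2.1 a.2.2⟩
  refine (Nat.card_quot_eq_of_transversal ⟨fun a => .refl a.1, .symm, .trans⟩ rep
    (fun a b h => Subtype.ext (eq_of_shelfIso_alexander5 a b h)) fun ⟨_, h⟩ => ?_).trans ?_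
  · obtain ⟨a, ha0, ha1, ha⟩ := exists_shelfIso_alexander5 h
    exact ⟨⟨a, ha0, ha1⟩, ha⟩
  · rw [Nat.card_eq_fintype_card]
    decide
end
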